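/- The torus Lie algebra is a Lie algebra: let Γ be a free abelian group of finite rank equipped with an integer-valued skew-symmetric bilinear form ⟨·,·⟩, and let g = ⊕_{γ∈Γ} ℚ·e_γ with bracket [e_{γ₁}, e_{γ₂}] = (−1)^{⟨γ₁,γ₂⟩} ⟨γ₁,γ₂⟩ e_{γ₁+γ₂}. Then this bracket is antisymmetric and satisfies the Jacobi identity. -/

import Mathlib

/-!
Both identities are additive in each argument, so it suffices to check them on basis vectors
`e_γ`. There they reduce to identities between the structure constants
`c(γ₁, γ₂) = (−1)^{⟨γ₁,γ₂⟩} ⟨γ₁,γ₂⟩`: `c` is antisymmetric, and in the cyclic sum of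
`c(γ₂, γ₃) c(γ₁, γ₂ + γ₃)` all three signs equal `(−1)^{⟨γ₁,γ₂⟩ + ⟨γ₂,γ₃⟩ + ⟨γ₃,γ₁⟩}`, leaving
`⟨γ₂,γ₃⟩(⟨γ₁,γ₂⟩ − ⟨γ₃,γ₁⟩) + (cyclic) = 0`.
-/

/-- The bracket of the torus Lie algebra `g = ⊕_{γ∈Γ} ℚ·e_γ` (with `Γ = ℤ^k`),
defined on basis vectors by `[e_{γ₁}, e_{γ₂}] = (−1)^{⟨γ₁,γ₂⟩} ⟨γ₁,γ₂⟩ e_{γ₁+γ₂}`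
and extended bilinearly. -/
noncomputable def torusBracket {k : ℕ} (B : (Fin k → ℤ) → (Fin k → ℤ) → ℤ)
    (f g : (Fin k → ℤ) →₀ ℚ) : (Fin k → ℤ) →₀ ℚ :=
  f.sum fun γ₁ a => g.sum fun γ₂ b =>
    Finsupp.single (γ₁ + γ₂) (a * b * ((-1 : ℚ) ^ (B γ₁ γ₂) * (B γ₁ γ₂ : ℚ)))

namespace Finsupp

variable {α M N : Type*} [AddZeroClass M] [AddCommGroup N]

theorem eq_zero_of_map_add {T : (α →₀ M) → N} (hadd : ∀ f g, T (f + g) = T f + T g)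
    (hsingle : ∀ a x, T (single a x) = 0) (f : α →₀ M) : T f = 0 :=
  DFunLike.congr_fun (addHom_ext (f := AddMonoidHom.mk' T hadd) (g := 0) hsingle) f

theorem eq_zero_of_map_add₂ {T : (α →₀ M) → (α →₀ M) → N}
    (hadd₁ : ∀ f₁ f₂ g, T (f₁ + f₂) g = T f₁ g + T f₂ g)
    (hadd₂ : ∀ f g₁ g₂, T f (g₁ + g₂) = T f g₁ + T f g₂)
    (hsingle : ∀ a b x y, T (single a x) (single b y) = 0) (f g : α →₀ M) : T f g = 0 :=
  eq_zero_of_map_add (T := (T · g)) (hadd₁ · · g)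
    (fun a x => eq_zero_of_map_add (hadd₂ _) (hsingle a · x) g) f

theorem eq_zero_of_map_add₃ {T : (α →₀ M) → (α →₀ M) → (α →₀ M) → N}
    (hadd₁ : ∀ f₁ f₂ g h, T (f₁ + f₂) g h = T f₁ g h + T f₂ g h)
    (hadd₂ : ∀ f g₁ g₂ h, T f (g₁ + g₂) h = T f g₁ h + T f g₂ h)
    (hadd₃ : ∀ f g h₁ h₂, T f g (h₁ + h₂) = T f g h₁ + T f g h₂)
    (hsingle : ∀ a b c x y z, T (single a x) (single b y) (single c z) = 0)
    (f g h : α →₀ M) : T f g h = 0 :=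
  eq_zero_of_map_add (T := (T · g h)) (hadd₁ · · g h)
    (fun a x => eq_zero_of_map_add₂ (hadd₂ _) (hadd₃ _) (hsingle a · · x) g h) f

end Finsupp

section StructureConstants

variable {Γ : Type*} (B : Γ → Γ → ℤ)

noncomputable def torusCoeff (γ₁ γ₂ : Γ) : ℚ :=
  (-1 : ℚ) ^ (B γ₁ γ₂) * (B γ₁ γ₂ : ℚ)

variable {B}

theorem torusCoeff_swap (hskew : ∀ x y, B x y = - B y x) (γ₁ γ₂ : Γ) :
    torusCoeff B γ₂ γ₁ = - torusCoeff B γ₁ γ₂ := by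
  simp only [torusCoeff, ← Int.cast_negOnePow, hskew γ₂ γ₁, Int.negOnePow_neg]
  push_cast
  ring

theorem torusCoeff_cyclic [Add Γ] (hskew : ∀ x y, B x y = - B y x)
    (haddr : ∀ x y z, B x (y + z) = B x y + B x z) (γ₁ γ₂ γ₃ : Γ) :
    torusCoeff B γ₂ γ₃ * torusCoeff B γ₁ (γ₂ + γ₃) +
      torusCoeff B γ₃ γ₁ * torusCoeff B γ₂ (γ₃ + γ₁) +
      torusCoeff B γ₁ γ₂ * torusCoeff B γ₃ (γ₁ + γ₂) = 0 := by
  simp only [torusCoeff, ← Int.cast_negOnePow, haddr, hskew γ₁ γ₃, hskew γ₂ γ₁, hskew γ₃ γ₂,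
    Int.negOnePow_add, Int.negOnePow_neg]
  push_cast
  ring

end StructureConstants

section Bracket

variable {k : ℕ} (B : (Fin k → ℤ) → (Fin k → ℤ) → ℤ)

theorem torusBracket_single_single (γ₁ γ₂ : Fin k → ℤ) (a b : ℚ) :
    torusBracket B (Finsupp.single γ₁ a) (Finsupp.single γ₂ b) =
      Finsupp.single (γ₁ + γ₂) (a * b * torusCoeff B γ₁ γ₂) := by
  simp [torusBracket, torusCoeff]

theorem torusBracket_add_left (f₁ f₂ g : (Fin k → ℤ) →₀ ℚ) :
    torusBracket B (f₁ + f₂) g = torusBracket B f₁ g + torusBracket B f₂ g := by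
  refine Finsupp.sum_add_index' (fun γ => by simp) fun γ a₁ a₂ => ?_
  simp only [← Finsupp.sum_add, ← Finsupp.single_add, add_mul]

theorem torusBracket_add_right (f g₁ g₂ : (Fin k → ℤ) →₀ ℚ) :
    torusBracket B f (g₁ + g₂) = torusBracket B f g₁ + torusBracket B f g₂ := by
  refine (Finsupp.sum_congr fun γ₁ _ => Finsupp.sum_add_index' (fun γ => by simp)
    fun γ b₁ b₂ => ?_).trans Finsupp.sum_add
  simp only [← Finsupp.single_add, mul_add, add_mul]

variable {B}

theorem torusBracket_single_anticomm (hskew : ∀ x y, B x y = - B y x) (γ₁ γ₂ : Fin k → ℤ)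
    (a b : ℚ) :
    torusBracket B (Finsupp.single γ₁ a) (Finsupp.single γ₂ b) +
      torusBracket B (Finsupp.single γ₂ b) (Finsupp.single γ₁ a) = 0 := by
  rw [torusBracket_single_single, torusBracket_single_single, torusCoeff_swap hskew, add_comm γ₂,
    ← Finsupp.single_add, Finsupp.single_eq_zero]
  ring

theorem torusBracket_single_jacobi (hskew : ∀ x y, B x y = - B y x)
    (haddr : ∀ x y z, B x (y + z) = B x y + B x z) (γ₁ γ₂ γ₃ : Fin k → ℤ) (a b c : ℚ) :
    torusBracket B (Finsupp.single γ₁ a)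
        (torusBracket B (Finsupp.single γ₂ b) (Finsupp.single γ₃ c)) +
      torusBracket B (Finsupp.single γ₂ b)
        (torusBracket B (Finsupp.single γ₃ c) (Finsupp.single γ₁ a)) +
      torusBracket B (Finsupp.single γ₃ c)
        (torusBracket B (Finsupp.single γ₁ a) (Finsupp.single γ₂ b)) = 0 := by
  simp only [torusBracket_single_single]
  rw [show γ₂ + (γ₃ + γ₁) = γ₁ + (γ₂ + γ₃) by abel, show γ₃ + (γ₁ + γ₂) = γ₁ + (γ₂ + γ₃) by abel,
    ← Finsupp.single_add, ← Finsupp.single_add, Finsupp.single_eq_zero]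
  linear_combination (a * b * c) * torusCoeff_cyclic hskew haddr γ₁ γ₂ γ₃

end Bracket

theorem torus_lie_algebra_general {k : ℕ} (B : (Fin k → ℤ) → (Fin k → ℤ) → ℤ)
    (hskew : ∀ x y, B x y = - B y x)
    (haddr : ∀ x y z, B x (y + z) = B x y + B x z) :
    (∀ f g : (Fin k → ℤ) →₀ ℚ, torusBracket B f g = - torusBracket B g f) ∧
    (∀ f g h : (Fin k → ℤ) →₀ ℚ,
      torusBracket B f (torusBracket B g h) +
      torusBracket B g (torusBracket B h f) +
      torusBracket B h (torusBracket B f g) = 0) := by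
  refine ⟨fun f g => eq_neg_of_add_eq_zero_left ?_, ?_⟩
  · refine Finsupp.eq_zero_of_map_add₂ (T := fun f g => torusBracket B f g + torusBracket B g f)
      ?_ ?_ (torusBracket_single_anticomm hskew) f g <;>
    · intros
      simp only [torusBracket_add_left, torusBracket_add_right]
      abel
  · refine Finsupp.eq_zero_of_map_add₃ ?_ ?_ ?_ (torusBracket_single_jacobi hskew haddr) <;>
    · intros
      simp only [torusBracket_add_left, torusBracket_add_right]
      abel

/-- The torus Lie algebra bracket is antisymmetric and satisfies the Jacobi identity. -/
theorem torus_lie_algebra {k : ℕ} (B : (Fin k → ℤ) → (Fin k → ℤ) → ℤ)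
    (hskew : ∀ x y, B x y = - B y x)
    (haddl : ∀ x y z, B (x + y) z = B x z + B y z)
    (haddr : ∀ x y z, B x (y + z) = B x y + B x z) :
    (∀ f g : (Fin k → ℤ) →₀ ℚ, torusBracket B f g = - torusBracket B g f) ∧
    (∀ f g h : (Fin k → ℤ) →₀ ℚ,
      torusBracket B f (torusBracket B g h) +
      torusBracket B g (torusBracket B h f) +
      torusBracket B h (torusBracket B f g) = 0) :=
  torus_lie_algebra_general B hskew haddr
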